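/- If a composition α is (i,z)-removable, then z ≤ α_i − α_{k_α(i)}, where k_α(i) = min{k > i : α_k < α_i}. -/

import Mathlib

/-- The matrix `c_{i,j}(α)` defined recursively in `j`. -/
def cmat (α : ℕ → ℕ) (i : ℕ) : ℕ → ℕ
  | 0 => 0
  | j + 1 =>
    if j + 1 ≤ i + 1 then 0
    else cmat α i j + if α j < α i - cmat α i j then 1 else 0

/-- `α` covers `α'` in position `(i,j)`: conditions (a1)–(a4). -/
def CoversAt (α α' : ℕ → ℕ) (i j : ℕ) : Prop :=
  1 ≤ i ∧ i < j ∧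
  α' i + 1 ≤ α i ∧
  α' j + α' i + 1 = α j + α i ∧
  (∀ k, k ≠ i → k ≠ j → α' k = α k) ∧
  cmat α i j = cmat α' i j ∧
  cmat α i j + α j = α' i

/-- `α` is `(i,z)`-removable. -/
def IsRemovable (α : ℕ → ℕ) (i z : ℕ) : Prop :=
  ∃ α' j, CoversAt α α' i j ∧ α' i + z = α i

/-- `J̃(i,z)`: the greatest `j > i` such that `c_{i,j}(α) = c_{i,j}(α̃)`,
where `α̃` is `α` with `α_i` replaced by `α_i - z`. -/
noncomputable def Jt (α : ℕ → ℕ) (i z : ℕ) : ℕ :=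
  sSup {j | i < j ∧ cmat α i j = cmat (Function.update α i (α i - z)) i j}

/-- `k_α(i) = min {k > i : α_k < α_i}`. -/
noncomputable def kfun (α : ℕ → ℕ) (i : ℕ) : ℕ :=
  sInf {k | i < k ∧ α k < α i}

/-!
Write `β = α'` for the composition covered by `α`, so `β i = α i - z` and `β` agrees with `α` strictly
between `i` and `j`. Along `m`, the gap `c_{i,m}(α) - c_{i,m}(β)` never decreases and stays in `[0, z]`,
so the covering condition `c_{i,j}(α) = c_{i,j}(β)` forces `c_{i,m}(α) = c_{i,m}(β)` for all `m ≤ j`.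
Up to `K = k_α(i)` the entries `c_{i,m}(α)` vanish. If `j < K` this contradicts `β i = c_{i,j}(α) + α_j`;
if `j = K` it gives `β i = α_K`; if `j > K`, the step at `K` raises `c(α)`, hence also `c(β)`,
which means `α_K < β i`.
-/

lemma cmat_of_le (α : ℕ → ℕ) {i m : ℕ} (h : m ≤ i + 1) : cmat α i m = 0 := by
  cases m with
  | zero => rfl
  | succ m => rw [cmat, if_pos h]

lemma cmat_succ (α : ℕ → ℕ) {i m : ℕ} (h : i < m) :
    cmat α i (m + 1) = cmat α i m + if α m < α i - cmat α i m then 1 else 0 := by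
  rw [cmat, if_neg (by omega)]

lemma cmat_eq_zero_of_forall_le {α : ℕ → ℕ} {i n : ℕ} (h : ∀ k, i < k → k < n → α i ≤ α k) :
    cmat α i n = 0 := by
  induction n with
  | zero => rfl
  | succ m ih =>
    rcases Nat.lt_or_ge i m with him | him
    · have hm := h m him (by omega)
      rw [cmat_succ α him, ih fun k h1 h2 => h k h1 (by omega), if_neg (by omega)]
    · exact cmat_of_le α (by omega)

section Perturbation

variable {α β : ℕ → ℕ} {i n : ℕ}

lemma cmat_le_cmat_and_cmat_le_add (hle : β i ≤ α i) (hagree : ∀ k, i < k → k < n → β k = α k) :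
    cmat β i n ≤ cmat α i n ∧ cmat α i n ≤ cmat β i n + (α i - β i) := by
  induction n with
  | zero => simp [cmat]
  | succ m ih =>
    rcases Nat.lt_or_ge i m with him | him
    · have hm := hagree m him (by omega)
      have := ih fun k h1 h2 => hagree k h1 (by omega)
      rw [cmat_succ α him, cmat_succ β him, hm]
      split_ifs <;> omega
    · simp [cmat_of_le _ (show m + 1 ≤ i + 1 by omega)]

lemma cmat_sub_cmat_le_succ (hle : β i ≤ α i) (hagree : ∀ k, i < k → k < n + 1 → β k = α k) :
    cmat α i n - cmat β i n ≤ cmat α i (n + 1) - cmat β i (n + 1) := by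
  rcases Nat.lt_or_ge i n with hin | hin
  · have hn := hagree n hin (by omega)
    have := cmat_le_cmat_and_cmat_le_add (n := n) hle fun k h1 h2 => hagree k h1 (by omega)
    rw [cmat_succ α hin, cmat_succ β hin, hn]
    split_ifs <;> omega
  · simp [cmat_of_le _ (show n ≤ i + 1 by omega)]

lemma cmat_sub_cmat_mono (hle : β i ≤ α i) {m : ℕ} (hmn : m ≤ n) :
    (∀ k, i < k → k < n → β k = α k) →
      cmat α i m - cmat β i m ≤ cmat α i n - cmat β i n := by
  induction n, hmn using Nat.le_induction with
  | base => exact fun _ => le_rfl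
  | succ n _ ih =>
    exact fun hagree => (ih fun k h1 h2 => hagree k h1 (by omega)).trans
      (cmat_sub_cmat_le_succ hle hagree)

lemma cmat_eq_cmat_of_le (hle : β i ≤ α i) (hagree : ∀ k, i < k → k < n → β k = α k)
    (heq : cmat α i n = cmat β i n) {m : ℕ} (hmn : m ≤ n) : cmat α i m = cmat β i m := by
  have hgap := cmat_sub_cmat_mono hle hmn hagree
  have := cmat_le_cmat_and_cmat_le_add (n := m) hle fun k h1 h2 => hagree k h1 (by omega)
  omega

end Perturbation

lemma kfun_spec {α : ℕ → ℕ} (hbd : ∃ m, ∀ k, m < k → α k = 0) {i : ℕ} (hpos : 0 < α i) :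
    i < kfun α i ∧ α (kfun α i) < α i := by
  obtain ⟨m, hm⟩ := hbd
  exact Nat.sInf_mem (s := {k | i < k ∧ α k < α i})
    ⟨m + i + 1, by omega, by rw [hm _ (by omega)]; exact hpos⟩

lemma le_of_lt_kfun {α : ℕ → ℕ} {i k : ℕ} (hik : i < k) (hk : k < kfun α i) : α i ≤ α k :=
  not_lt.1 fun hlt => (Nat.sInf_le (s := {k | i < k ∧ α k < α i}) ⟨hik, hlt⟩).not_gt hk

theorem removable_le_general (α : ℕ → ℕ) (hbd : ∃ m, ∀ k, m < k → α k = 0)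
    (i z : ℕ) (h : IsRemovable α i z) :
    z + α (kfun α i) ≤ α i := by
  obtain ⟨β, j, ⟨-, hij, hβlt, -, hagree, hcj, hβi⟩, hz⟩ := h
  have hK := kfun_spec hbd (i := i) (by omega)
  have hmin : ∀ k, i < k → k < kfun α i → α i ≤ α k := fun _ => le_of_lt_kfun
  have hagree' : ∀ k, i < k → k < j → β k = α k := fun k h1 h2 => hagree k (by omega) (by omega)
  rcases lt_or_ge (kfun α i) j with hKj | hjK
  · have hstep := cmat_eq_cmat_of_le (by omega) hagree' hcj hKj
    have hcK := cmat_eq_cmat_of_le (by omega) hagree' hcj hKj.le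
    rw [cmat_eq_zero_of_forall_le hmin] at hcK
    rw [cmat_succ α hK.1, cmat_succ β hK.1, hagree _ (by omega) (by omega), ← hcK,
      cmat_eq_zero_of_forall_le hmin] at hstep
    split_ifs at hstep <;> omega
  · rw [cmat_eq_zero_of_forall_le fun k h1 h2 => hmin k h1 (by omega)] at hβi
    rcases hjK.lt_or_eq with hjK | rfl
    · have := le_of_lt_kfun hij hjK
      omega
    · omega

/-- if `α` is `(i,z)`-removable then `z ≤ α_i - α_{k_α(i)}`. -/
theorem removable_le (α : ℕ → ℕ) (hbd : ∃ m, ∀ k, m < k → α k = 0)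
    (i z : ℕ) (hi : 1 ≤ i) (hz1 : 1 ≤ z) (h : IsRemovable α i z) :
    z + α (kfun α i) ≤ α i :=
  removable_le_general α hbd i z h
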